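/- For any 3-SAT formula Γ, every defeasible theory based on the rule set R_Γ obtained by the Γ-transformation is decisive (for every literal p either +∂ p or −∂ p is derivable), because the atom dependency graph of R_Γ is acyclic. -/

import Mathlib

/-!
Every rule of `R_Γ` leads from an atom of Γ to some `c i`, or from some `c i` to `p`, so ranking
these three strata 0, 1, 2 makes every edge of the atom dependency graph strictly increasing; the
graph is therefore well-founded, hence acyclic. In a theory without facts, a literal `q` is
decided (`+∂ q` or `−∂ q`) as soon as the antecedents of all rules for `q` and `∼q` are decided,
because all the proofs involved can be concatenated into one. Well-founded induction along the
dependency graph then decides every literal.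
-/

namespace DL

abbrev Atom := ℕ

/-- A literal: an atom with a polarity. -/
structure Lit where
  atom : Atom
  pos : Bool
deriving DecidableEq

/-- The complement `∼p` of a literal. -/
def Lit.neg (l : Lit) : Lit := ⟨l.atom, !l.pos⟩

/-- A defeasible rule: a finite set of antecedent literals and a head literal. -/
structure Rule where
  ante : Finset Lit
  head : Lit
deriving DecidableEq

/-- A defeasible theory: facts, defeasible rules, and a superiority relation. -/
structure DTheory where
  facts : Finset Lit
  rules : Finset Rule
  sup : Rule → Rule → Prop

/-- A superiority relation is acyclic iff its transitive closure is irreflexive. -/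
def Acyclic (sup : Rule → Rule → Prop) : Prop :=
  Irreflexive (Relation.TransGen sup)

def DTheory.FactsConsistent (D : DTheory) : Prop :=
  ∀ l ∈ D.facts, l.neg ∉ D.facts

/-- Well-formedness of a defeasible theory: consistent facts, acyclic superiority
relation defined on the rules of the theory. -/
def DTheory.WellFormed (D : DTheory) : Prop :=
  D.FactsConsistent ∧ Acyclic D.sup ∧ ∀ r s, D.sup r s → r ∈ D.rules ∧ s ∈ D.rules

/-- Proof tags: Δ, Σ, σ, ω, φ, ∂. -/
inductive Tag | delta | Sig | sgm | omg | phi | prt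
deriving DecidableEq

/-- A tagged literal: a tag, a sign (`true` = `+`, `false` = `−`), and a literal. -/
abbrev TLit := Tag × Bool × Lit

/-- The proof conditions of Defeasible Logic (defeasible rules only), relative to
the preceding part `P` of a proof sequence. -/
def Cond (D : DTheory) (P : List TLit) : Tag → Bool → Lit → Prop
  | .delta, true, q => q ∈ D.facts
  | .delta, false, q => q ∉ D.facts
  | .Sig, true, q =>
      (Tag.delta, true, q) ∈ P ∨
      ∃ r ∈ D.rules, r.head = q ∧ ∀ a ∈ r.ante, (Tag.Sig, true, a) ∈ P
  | .Sig, false, q =>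
      (Tag.delta, true, q) ∉ P ∧
      ∀ r ∈ D.rules, r.head = q → ∃ a ∈ r.ante, (Tag.Sig, false, a) ∈ P
  | .sgm, true, q =>
      (Tag.delta, true, q) ∈ P ∨
      ∃ r ∈ D.rules, r.head = q ∧ (∀ a ∈ r.ante, (Tag.sgm, true, a) ∈ P) ∧
        ∀ s ∈ D.rules, s.head = q.neg →
          (∃ a ∈ s.ante, (Tag.prt, false, a) ∈ P) ∨ ¬ D.sup s r
  | .sgm, false, q =>
      (Tag.delta, true, q) ∉ P ∧
      ∀ r ∈ D.rules, r.head = q →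
        (∃ a ∈ r.ante, (Tag.sgm, false, a) ∈ P) ∨
        ∃ s ∈ D.rules, s.head = q.neg ∧ (∀ a ∈ s.ante, (Tag.prt, true, a) ∈ P) ∧ D.sup s r
  | .omg, true, q =>
      (Tag.delta, true, q) ∈ P ∨
      ∃ r ∈ D.rules, r.head = q ∧ ∀ a ∈ r.ante, (Tag.prt, true, a) ∈ P
  | .omg, false, q =>
      (Tag.delta, true, q) ∉ P ∧
      ∀ r ∈ D.rules, r.head = q → ∃ a ∈ r.ante, (Tag.prt, false, a) ∈ P
  | .phi, true, q =>
      (Tag.delta, true, q) ∈ P ∨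
      ∃ r ∈ D.rules, r.head = q ∧ (∀ a ∈ r.ante, (Tag.phi, true, a) ∈ P) ∧
        ∀ s ∈ D.rules, s.head = q.neg → ∃ a ∈ s.ante, (Tag.Sig, false, a) ∈ P
  | .phi, false, q =>
      (Tag.delta, true, q) ∉ P ∧
      ∀ r ∈ D.rules, r.head = q →
        (∃ a ∈ r.ante, (Tag.phi, false, a) ∈ P) ∨
        ∃ s ∈ D.rules, s.head = q.neg ∧ ∀ a ∈ s.ante, (Tag.Sig, true, a) ∈ P
  | .prt, true, q =>
      (Tag.delta, true, q) ∈ P ∨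
      ((Tag.delta, false, q.neg) ∈ P ∧
       (∃ r ∈ D.rules, r.head = q ∧ ∀ a ∈ r.ante, (Tag.prt, true, a) ∈ P) ∧
       ∀ s ∈ D.rules, s.head = q.neg →
         (∃ a ∈ s.ante, (Tag.prt, false, a) ∈ P) ∨
         ∃ t ∈ D.rules, t.head = q ∧ (∀ a ∈ t.ante, (Tag.prt, true, a) ∈ P) ∧ D.sup t s)
  | .prt, false, q =>
      (Tag.delta, true, q) ∉ P ∧
      ((Tag.delta, true, q.neg) ∈ P ∨
       (∀ r ∈ D.rules, r.head = q → ∃ a ∈ r.ante, (Tag.prt, false, a) ∈ P) ∨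
       ∃ s ∈ D.rules, s.head = q.neg ∧ (∀ a ∈ s.ante, (Tag.prt, true, a) ∈ P) ∧
         ∀ t ∈ D.rules, t.head = q →
           (∃ a ∈ t.ante, (Tag.prt, false, a) ∈ P) ∨ ¬ D.sup t s)

/-- A proof (derivation) is a finite sequence of tagged literals each of which
satisfies the proof condition relative to the preceding part of the sequence. -/
inductive ValidProof (D : DTheory) : List TLit → Prop
  | nil : ValidProof D []
  | snoc {P : List TLit} {t : Tag} {s : Bool} {q : Lit} :
      ValidProof D P → Cond D P t s q → ValidProof D (P ++ [(t, s, q)])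

/-- `D ⊢ ±# q`: some valid proof in `D` contains the tagged literal. -/
def Proves (D : DTheory) (t : Tag) (s : Bool) (q : Lit) : Prop :=
  ∃ P, ValidProof D P ∧ (t, s, q) ∈ P

/-- A theory is consistent iff it never defeasibly proves both a literal and
its complement. -/
def Consistent (D : DTheory) : Prop :=
  ∀ p : Lit, ¬ (Proves D .prt true p ∧ Proves D .prt true p.neg)

/-- `a` depends on `b` iff `b = a`, or for every rule for `a` either `b` is an
antecedent or some antecedent depends on `b` (least such relation,
impredicatively encoded). -/
def DependsOn (D : DTheory) (a b : Lit) : Prop :=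
  ∀ S : Lit → Lit → Prop,
    (∀ x, S x x) →
    (∀ x y, (∀ r ∈ D.rules, r.head = x → y ∈ r.ante ∨ ∃ c ∈ r.ante, S c y) → S x y) →
    S a b

/-- `p` is ∂-unreachable iff every rule for `p` either has two antecedents
depending on complementary literals or has a ∂-unreachable antecedent
(least such predicate, impredicatively encoded). -/
def Unreachable (D : DTheory) (p : Lit) : Prop :=
  ∀ S : Lit → Prop,
    (∀ x, (∀ r ∈ D.rules, r.head = x →
        (∃ l : Lit, ∃ a ∈ r.ante, ∃ b ∈ r.ante, DependsOn D a l ∧ DependsOn D b l.neg) ∨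
        ∃ d ∈ r.ante, S d) → S x) →
    S p

/-- The literal `p` appears in the theory `D` (its atom occurs in `D`). -/
def AppearsIn (p : Lit) (D : DTheory) : Prop :=
  (∃ l ∈ D.facts, l.atom = p.atom) ∨
  ∃ r ∈ D.rules, r.head.atom = p.atom ∨ ∃ l ∈ r.ante, l.atom = p.atom

/-- Positive part of the belief set of a defeasible theory. -/
def BSplus (D : DTheory) : Set Lit := {p | AppearsIn p D ∧ Proves D .prt true p}

/-- Negative part of the belief set of a defeasible theory. -/
def BSminus (D : DTheory) : Set Lit := {p | AppearsIn p D ∧ Proves D .prt false p}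

/-- The belief set of a defeasible theory. -/
def BS (D : DTheory) : Set Lit := BSplus D ∪ BSminus D

/-- Edge of the atom dependency graph: from atom `a` to atom `b` whenever some
rule has head with atom `b` and an antecedent literal with atom `a`. -/
def AtomEdge (D : DTheory) (a b : Atom) : Prop :=
  ∃ r ∈ D.rules, r.head.atom = b ∧ ∃ l ∈ r.ante, l.atom = a

/-- A theory is decisive iff every literal appearing in it is defeasibly
provable or defeasibly refuted. -/
def Decisive (D : DTheory) : Prop :=
  ∀ p : Lit, AppearsIn p D → Proves D .prt true p ∨ Proves D .prt false p

end DL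

namespace DL

/-- The rule set `R_Γ` of the Γ-transformation of a 3-SAT formula
`Γ = ∧ᵢ (aᵢ¹ ∨ aᵢ² ∨ aᵢ³)`, with fresh atoms `c i` and `p`. -/
def gammaRules (n : ℕ) (Γ : Fin n → Fin 3 → Lit) (c : Fin n → Atom) (p : Atom) :
    Finset Rule :=
  (Finset.univ.image fun ij : Fin n × Fin 3 => (⟨∅, Γ ij.1 ij.2⟩ : Rule)) ∪
  (Finset.univ.image fun ij : Fin n × Fin 3 =>
    (⟨{Γ ij.1 ij.2}, ⟨c ij.1, true⟩⟩ : Rule)) ∪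
  (Finset.univ.image fun i : Fin n => (⟨∅, ⟨c i, false⟩⟩ : Rule)) ∪
  (Finset.univ.image fun i : Fin n => (⟨{⟨c i, false⟩}, ⟨p, true⟩⟩ : Rule))

/-- Freshness of the atoms `c i` and `p` with respect to Γ. -/
def GammaFresh (n : ℕ) (Γ : Fin n → Fin 3 → Lit) (c : Fin n → Atom) (p : Atom) : Prop :=
  Function.Injective c ∧ (∀ i, c i ≠ p) ∧
  ∀ i j, (Γ i j).atom ≠ p ∧ ∀ k, (Γ i j).atom ≠ c k

/-- Satisfiability of the 3-SAT formula Γ. -/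
def GammaSat (n : ℕ) (Γ : Fin n → Fin 3 → Lit) : Prop :=
  ∃ I : Atom → Bool, ∀ i : Fin n, ∃ j : Fin 3, I (Γ i j).atom = (Γ i j).pos

end DL

namespace DL

variable {D : DTheory}

theorem ValidProof.delta_true_notMem (hD : D.facts = ∅) {P : List TLit}
    (hP : ValidProof D P) (q : Lit) : (Tag.delta, true, q) ∉ P := by
  induction hP with
  | nil => simp
  | @snoc P t s q' _ hc ih =>
    rw [List.mem_append, List.mem_singleton]
    rintro (h | h)
    · exact ih h
    · obtain ⟨rfl, rfl, rfl⟩ := Prod.ext_iff.1 h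
      simp [Cond, hD] at hc

/-- Apart from `+Δ q ∉ P`, every proof condition refers to `P` only through positive
membership. -/
theorem Cond.mono {P P' : List TLit} (hsub : P ⊆ P')
    (hnd : ∀ q : Lit, (Tag.delta, true, q) ∉ P') {t : Tag} {s : Bool} {q : Lit}
    (h : Cond D P t s q) : Cond D P' t s q := by
  cases t <;> cases s <;> simp only [Cond] at h ⊢ <;> grind

theorem ValidProof.append (hD : D.facts = ∅) {P Q : List TLit} (hP : ValidProof D P)
    (hQ : ValidProof D Q) : ValidProof D (P ++ Q) := by
  induction hQ with
  | nil => simpa using hP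
  | snoc _ hc ih =>
    rw [← List.append_assoc]
    exact ih.snoc (hc.mono (List.subset_append_right _ _) (ih.delta_true_notMem hD))

theorem exists_validProof_forall_mem (hD : D.facts = ∅) (S : Finset TLit) :
    ∃ P, ValidProof D P ∧ ∀ x ∈ S, Proves D x.1 x.2.1 x.2.2 → x ∈ P := by
  classical
  induction S using Finset.induction with
  | empty => exact ⟨[], .nil, by simp⟩
  | @insert x S _ ih =>
    obtain ⟨P, hP, hPS⟩ := ih
    by_cases hx : Proves D x.1 x.2.1 x.2.2
    · obtain ⟨Q, hQ, hxQ⟩ := hx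
      refine ⟨Q ++ P, hQ.append hD hP, ?_⟩
      simp only [Finset.mem_insert, forall_eq_or_imp, List.mem_append]
      exact ⟨fun _ => .inl hxQ, fun y hy hpy => .inr (hPS y hy hpy)⟩
    · refine ⟨P, hP, ?_⟩
      simp only [Finset.mem_insert, forall_eq_or_imp]
      exact ⟨fun h => absurd h hx, hPS⟩

theorem exists_validProof_forall_ante (hD : D.facts = ∅) :
    ∃ P, ValidProof D P ∧ ∀ b, ∀ r ∈ D.rules, ∀ a ∈ r.ante,
      Proves D .prt b a → (Tag.prt, b, a) ∈ P := by
  classical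
  obtain ⟨P, hP, hPS⟩ := exists_validProof_forall_mem hD
    ((Finset.univ ×ˢ D.rules.biUnion Rule.ante).image fun x => (Tag.prt, x.1, x.2))
  refine ⟨P, hP, fun b r hr a ha => hPS (Tag.prt, b, a) ?_⟩
  exact Finset.mem_image.2 ⟨(b, a), by simpa using ⟨r, hr, ha⟩, rfl⟩

theorem proves_prt_true (hD : D.facts = ∅) {q : Lit}
    (happ : ∃ r ∈ D.rules, r.head = q ∧ ∀ a ∈ r.ante, Proves D .prt true a)
    (hdef : ∀ s ∈ D.rules, s.head = q.neg →
      (∃ a ∈ s.ante, Proves D .prt false a) ∨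
      ∃ t ∈ D.rules, t.head = q ∧ (∀ a ∈ t.ante, Proves D .prt true a) ∧ D.sup t s) :
    Proves D .prt true q := by
  obtain ⟨P, hP, hPante⟩ := exists_validProof_forall_ante hD
  set P' := P ++ [(Tag.delta, false, q.neg)]
  have hP' : ValidProof D P' := hP.snoc (by simp [Cond, hD])
  have hmem : ∀ b, ∀ r ∈ D.rules, ∀ a ∈ r.ante, Proves D .prt b a → (Tag.prt, b, a) ∈ P' :=
    fun b r hr a ha hpa => List.mem_append_left _ (hPante b r hr a ha hpa)
  refine ⟨P' ++ [(Tag.prt, true, q)], hP'.snoc (.inr ⟨by simp [P'], ?_, ?_⟩), by simp⟩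
  · obtain ⟨r, hr, hrq, hante⟩ := happ
    exact ⟨r, hr, hrq, fun a ha => hmem true r hr a ha (hante a ha)⟩
  · intro s hs hsq
    rcases hdef s hs hsq with ⟨a, ha, hpa⟩ | ⟨t, ht, htq, hante, hts⟩
    · exact .inl ⟨a, ha, hmem false s hs a ha hpa⟩
    · exact .inr ⟨t, ht, htq, fun a ha => hmem true t ht a ha (hante a ha), hts⟩

theorem proves_prt_false (hD : D.facts = ∅) {q : Lit}
    (h : (∀ r ∈ D.rules, r.head = q → ∃ a ∈ r.ante, Proves D .prt false a) ∨
      ∃ s ∈ D.rules, s.head = q.neg ∧ (∀ a ∈ s.ante, Proves D .prt true a) ∧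
        ∀ t ∈ D.rules, t.head = q →
          (∃ a ∈ t.ante, Proves D .prt false a) ∨ ¬ D.sup t s) :
    Proves D .prt false q := by
  obtain ⟨P, hP, hmem⟩ := exists_validProof_forall_ante hD
  refine ⟨P ++ [(Tag.prt, false, q)],
    hP.snoc ⟨hP.delta_true_notMem hD q, .inr ?_⟩, by simp⟩
  rcases h with hblocked | ⟨s, hs, hsq, hante, hdef⟩
  · refine .inl fun r hr hrq => ?_
    obtain ⟨a, ha, hpa⟩ := hblocked r hr hrq
    exact ⟨a, ha, hmem false r hr a ha hpa⟩
  · refine .inr ⟨s, hs, hsq, fun a ha => hmem true s hs a ha (hante a ha), fun t ht htq => ?_⟩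
    exact (hdef t ht htq).imp_left fun ⟨a, ha, hpa⟩ => ⟨a, ha, hmem false t ht a ha hpa⟩

def Decided (D : DTheory) (q : Lit) : Prop :=
  Proves D .prt true q ∨ Proves D .prt false q

theorem decided_of_forall_ante (hD : D.facts = ∅) {q : Lit}
    (hante : ∀ r ∈ D.rules, (r.head = q ∨ r.head = q.neg) → ∀ a ∈ r.ante, Decided D a) :
    Decided D q := by
  have hante_q : ∀ r ∈ D.rules, r.head = q → ∀ a ∈ r.ante,
      ¬ Proves D .prt true a → Proves D .prt false a :=
    fun r hr hrq a ha => (hante r hr (.inl hrq) a ha).resolve_left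
  by_cases happ : ∃ r ∈ D.rules, r.head = q ∧ ∀ a ∈ r.ante, Proves D .prt true a
  · by_cases hdef : ∀ s ∈ D.rules, s.head = q.neg →
        (∃ a ∈ s.ante, Proves D .prt false a) ∨
        ∃ t ∈ D.rules, t.head = q ∧ (∀ a ∈ t.ante, Proves D .prt true a) ∧ D.sup t s
    · exact .inl (proves_prt_true hD happ hdef)
    · push Not at hdef
      obtain ⟨s, hs, hsq, hnot_false, hnot_sup⟩ := hdef
      refine .inr (proves_prt_false hD (.inr ⟨s, hs, hsq, fun a ha => ?_, fun t ht htq => ?_⟩))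
      · exact (hante s hs (.inr hsq) a ha).resolve_right (hnot_false a ha)
      · by_cases htante : ∀ a ∈ t.ante, Proves D .prt true a
        · exact .inr (hnot_sup t ht htq htante)
        · push Not at htante
          obtain ⟨a, ha, hna⟩ := htante
          exact .inl ⟨a, ha, hante_q t ht htq a ha hna⟩
  · push Not at happ
    refine .inr (proves_prt_false hD (.inl fun r hr hrq => ?_))
    obtain ⟨a, ha, hna⟩ := happ r hr hrq
    exact ⟨a, ha, hante_q r hr hrq a ha hna⟩

theorem decisive_of_wellFounded_atomEdge (hD : D.facts = ∅)
    (hwf : WellFounded (AtomEdge D)) : Decisive D := by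
  suffices ∀ x q, q.atom = x → Decided D q from fun q _ => this q.atom q rfl
  intro x
  induction x using hwf.induction with
  | _ x ih =>
    rintro q rfl
    refine decided_of_forall_ante hD fun r hr hrq a ha => ih a.atom ?_ a rfl
    exact ⟨r, hr, by rcases hrq with h | h <;> rw [h]; rfl, a, ha, rfl⟩

end DL

namespace DL

variable {n : ℕ} {Γ : Fin n → Fin 3 → Lit} {c : Fin n → Atom} {p : Atom}

theorem mem_gammaRules {r : Rule} :
    r ∈ gammaRules n Γ c p ↔
      (∃ i j, r = ⟨∅, Γ i j⟩) ∨ (∃ i j, r = ⟨{Γ i j}, ⟨c i, true⟩⟩) ∨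
      (∃ i, r = ⟨∅, ⟨c i, false⟩⟩) ∨ (∃ i, r = ⟨{⟨c i, false⟩}, ⟨p, true⟩⟩) := by
  simp only [gammaRules, Finset.mem_union, Finset.mem_image, Finset.mem_univ, true_and,
    Prod.exists, or_assoc, eq_comm]

def gammaRank (c : Fin n → Atom) (p a : Atom) : ℕ :=
  if a = p then 2 else if ∃ i, a = c i then 1 else 0

theorem gammaRank_lt_of_atomEdge (hf : GammaFresh n Γ c p) {sup : Rule → Rule → Prop}
    {a b : Atom} (hab : AtomEdge ⟨∅, gammaRules n Γ c p, sup⟩ a b) :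
    gammaRank c p a < gammaRank c p b := by
  obtain ⟨-, hcp, hΓ⟩ := hf
  obtain ⟨r, hr, rfl, l, hl, rfl⟩ := hab
  rcases mem_gammaRules.1 hr with ⟨i, j, rfl⟩ | ⟨i, j, rfl⟩ | ⟨i, rfl⟩ | ⟨i, rfl⟩
  all_goals simp only [Finset.mem_singleton, Finset.notMem_empty] at hl
  · subst hl
    simp [gammaRank, hcp, (hΓ i j).1, (hΓ i j).2]
  · subst hl
    simp [gammaRank, hcp]

theorem wellFounded_atomEdge_gammaRules (hf : GammaFresh n Γ c p) (sup : Rule → Rule → Prop) :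
    WellFounded (AtomEdge ⟨∅, gammaRules n Γ c p, sup⟩) :=
  Subrelation.wf (gammaRank_lt_of_atomEdge hf) (InvImage.wf (gammaRank c p) wellFounded_lt)

end DL

open DL in
theorem stmt6_general (n : ℕ) (Γ : Fin n → Fin 3 → Lit) (c : Fin n → Atom) (p : Atom)
    (hf : GammaFresh n Γ c p) (sup : Rule → Rule → Prop) :
    Irreflexive (Relation.TransGen (AtomEdge ⟨∅, gammaRules n Γ c p, sup⟩)) ∧
    Decisive ⟨∅, gammaRules n Γ c p, sup⟩ := by
  have hwf := wellFounded_atomEdge_gammaRules hf sup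
  exact ⟨hwf.transGen.irrefl.irrefl, decisive_of_wellFounded_atomEdge rfl hwf⟩

open DL in
/-- Every defeasible theory based on `R_Γ` has an acyclic atom dependency graph
and is decisive. -/
theorem stmt6 (n : ℕ) (Γ : Fin n → Fin 3 → Lit) (c : Fin n → Atom) (p : Atom)
    (hf : GammaFresh n Γ c p) (sup : Rule → Rule → Prop)
    (hwf : (⟨∅, gammaRules n Γ c p, sup⟩ : DTheory).WellFormed) :
    Irreflexive (Relation.TransGen (AtomEdge ⟨∅, gammaRules n Γ c p, sup⟩)) ∧
    Decisive ⟨∅, gammaRules n Γ c p, sup⟩ :=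
  stmt6_general n Γ c p hf sup
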